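/- The function g (defined as (2/π)(ρ arcsin ρ + √(1-ρ²)(2+ρ²)/3) for |ρ|<1 and |ρ| for |ρ|≥1) is twice continuously differentiable on ℝ, with g'(±1)=±1 and g''(±1)=0. -/

import Mathlib

open Real Set Filter Topology

noncomputable def g (ρ : ℝ) : ℝ :=
  if |ρ| < 1 then
    2 / Real.pi * (ρ * Real.arcsin ρ + Real.sqrt (1 - ρ^2) * (2 + ρ^2) / 3)
  else |ρ|

noncomputable def g1 (ρ : ℝ) : ℝ := 2 / π * (arcsin ρ + ρ * √(1 - ρ^2))
noncomputable def g2 (ρ : ℝ) : ℝ := 4 / π * √(1 - ρ^2)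

lemma g_eq : g = fun ρ : ℝ => 2 / π * (ρ * arcsin ρ + √(1 - ρ^2) * (2 + ρ^2) / 3) := by
  funext ρ
  unfold g
  split_ifs with h
  · rfl
  · push_neg at h
    have hsq : √(1 - ρ^2) = 0 :=
      Real.sqrt_eq_zero'.mpr (by nlinarith [abs_nonneg ρ, sq_abs ρ])
    rcases le_abs'.mp h with h1 | h1
    · rw [Real.arcsin_of_le_neg_one h1, hsq, abs_of_nonpos (by linarith)]
      field_simp; ring
    · rw [Real.arcsin_of_one_le h1, hsq, abs_of_nonneg (by linarith)]
      field_simp; ring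

lemma cont_g : Continuous g := by
  rw [g_eq]
  exact continuous_const.mul ((continuous_id.mul Real.continuous_arcsin).add
    (((Real.continuous_sqrt.comp (by fun_prop)).mul (by fun_prop)).div_const 3))

lemma cont_g1 : Continuous g1 :=
  continuous_const.mul (Real.continuous_arcsin.add
    (continuous_id.mul (Real.continuous_sqrt.comp (by fun_prop))))

lemma cont_g2 : Continuous g2 :=
  continuous_const.mul (Real.continuous_sqrt.comp (by fun_prop))

/-- gluing lemma: derivative limit. -/
lemma glue {f f' : ℝ → ℝ} {x : ℝ}
    (h : ∀ᶠ y in 𝓝[≠] x, HasDerivAt f (f' y) y)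
    (hf : ContinuousAt f x) (hf' : ContinuousAt f' x) :
    HasDerivAt f (f' x) x := by
  obtain ⟨s, hsmem, hs⟩ := h.exists_mem
  have hgt : s ∈ 𝓝[>] x := nhdsWithin_mono x (fun y (hy : y ∈ Ioi x) => ne_of_gt hy) hsmem
  have hlt : s ∈ 𝓝[<] x := nhdsWithin_mono x (fun y (hy : y ∈ Iio x) => ne_of_lt hy) hsmem
  have hdiff : DifferentiableOn ℝ f s := fun y hy =>
    (hs y hy).differentiableAt.differentiableWithinAt
  have A : HasDerivWithinAt f (f' x) (Ici x) x := by
    apply hasDerivWithinAt_Ici_of_tendsto_deriv hdiff hf.continuousWithinAt hgt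
    apply Filter.Tendsto.congr' _ (tendsto_nhdsWithin_of_tendsto_nhds hf')
    filter_upwards [hgt] with y hy
    exact ((hs y hy).deriv).symm
  have B : HasDerivWithinAt f (f' x) (Iic x) x := by
    apply hasDerivWithinAt_Iic_of_tendsto_deriv hdiff hf.continuousWithinAt hlt
    apply Filter.Tendsto.congr' _ (tendsto_nhdsWithin_of_tendsto_nhds hf')
    filter_upwards [hlt] with y hy
    exact ((hs y hy).deriv).symm
  simpa using B.union A

lemma one_sub_sq_pos {x : ℝ} (hx : |x| < 1) : 0 < 1 - x^2 := by
  nlinarith [abs_nonneg x, sq_abs x]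

lemma hasDerivAt_sqrt_one_sub_sq {x : ℝ} (hx : |x| < 1) :
    HasDerivAt (fun ρ : ℝ => √(1 - ρ^2)) (1 / (2 * √(1 - x^2)) * (-(2 * x))) x := by
  have hinner : HasDerivAt (fun ρ : ℝ => 1 - ρ^2) (-(2 * x)) x := by
    simpa using (hasDerivAt_pow 2 x).const_sub 1
  exact (Real.hasDerivAt_sqrt (one_sub_sq_pos hx).ne').comp x hinner

lemma hasDerivAt_g_lt {x : ℝ} (hx : |x| < 1) : HasDerivAt g (g1 x) x := by
  have h1 : x ≠ -1 := fun h => by rw [h] at hx; simp at hx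
  have h2 : x ≠ 1 := fun h => by rw [h] at hx; simp at hx
  have hs : 0 < √(1 - x^2) := Real.sqrt_pos.mpr (one_sub_sq_pos hx)
  have hs2 : √(1 - x^2)^2 = 1 - x^2 := Real.sq_sqrt (one_sub_sq_pos hx).le
  have hA : HasDerivAt (fun ρ : ℝ => ρ * arcsin ρ)
      (1 * arcsin x + x * (1 / √(1 - x^2))) x :=
    (hasDerivAt_id x).mul (Real.hasDerivAt_arcsin h1 h2)
  have hB : HasDerivAt (fun ρ : ℝ => √(1 - ρ^2) * (2 + ρ^2) / 3)
      ((1 / (2 * √(1 - x^2)) * (-(2 * x)) * (2 + x^2) + √(1 - x^2) * (2 * x)) / 3) x := by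
    have := ((hasDerivAt_sqrt_one_sub_sq hx).mul
      (by simpa using (hasDerivAt_pow 2 x).const_add 2 : HasDerivAt (fun y : ℝ => 2 + y^2) (2 * x) x)).div_const 3
    simpa using this
  have total := (hA.add hB).const_mul (2 / π)
  rw [g_eq]
  refine total.congr_deriv (Eq.symm ?_)
  unfold g1
  field_simp
  linear_combination x * hs2

lemma g1_of_one_le {x : ℝ} (h : 1 ≤ x) : g1 x = 1 := by
  unfold g1
  rw [Real.arcsin_of_one_le h, Real.sqrt_eq_zero'.mpr (by nlinarith)]
  field_simp
  ring

lemma g1_of_le_neg_one {x : ℝ} (h : x ≤ -1) : g1 x = -1 := by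
  unfold g1
  rw [Real.arcsin_of_le_neg_one h, Real.sqrt_eq_zero'.mpr (by nlinarith)]
  field_simp
  ring

lemma hasDerivAt_g_gt {x : ℝ} (hx : 1 < |x|) : HasDerivAt g (g1 x) x := by
  rcases lt_abs.mp hx with h | h
  · rw [g1_of_one_le h.le]
    apply (hasDerivAt_id x).congr_of_eventuallyEq
    filter_upwards [Ioi_mem_nhds h] with y hy
    have hy : (1:ℝ) < y := hy
    unfold g
    rw [if_neg (by rw [abs_of_pos (by linarith)]; linarith), abs_of_pos (by linarith)]
    rfl
  · have hx' : x < -1 := by linarith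
    rw [g1_of_le_neg_one hx'.le]
    have hD : HasDerivAt (fun y : ℝ => -y) (-1) x := (hasDerivAt_id x).neg
    apply hD.congr_of_eventuallyEq
    filter_upwards [Iio_mem_nhds hx'] with y hy
    have hy : y < -1 := hy
    unfold g
    rw [if_neg (by rw [abs_of_neg (by linarith)]; linarith), abs_of_neg (by linarith)]

lemma abs_ne_one_eventually {x : ℝ} (h : |x| = 1) :
    ∀ᶠ y in 𝓝[≠] x, |y| ≠ 1 := by
  filter_upwards [eventually_mem_nhdsWithin,
    mem_nhdsWithin_of_mem_nhds (Ioo_mem_nhds (show x - 1 < x by linarith)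
      (show x < x + 1 by linarith))] with y hy1 hy2 h'
  simp only [mem_compl_iff, mem_singleton_iff] at hy1
  simp only [mem_Ioo] at hy2
  rcases (abs_eq (by norm_num : (0:ℝ) ≤ 1)).mp h' with rfl | rfl <;>
    rcases (abs_eq (by norm_num : (0:ℝ) ≤ 1)).mp h with hx1 | hx1 <;>
    rw [hx1] at hy1 hy2 <;> first | exact hy1 rfl | linarith [hy2.1, hy2.2]

lemma hasDerivAt_g (x : ℝ) : HasDerivAt g (g1 x) x := by
  rcases lt_trichotomy |x| 1 with h | h | h
  · exact hasDerivAt_g_lt h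
  · apply glue _ (cont_g.continuousAt) (cont_g1.continuousAt)
    filter_upwards [abs_ne_one_eventually h] with y hy
    rcases lt_or_gt_of_ne hy with h' | h'
    · exact hasDerivAt_g_lt h'
    · exact hasDerivAt_g_gt h'
  · exact hasDerivAt_g_gt h

lemma hasDerivAt_g1_lt {x : ℝ} (hx : |x| < 1) : HasDerivAt g1 (g2 x) x := by
  have h1 : x ≠ -1 := fun h => by rw [h] at hx; simp at hx
  have h2 : x ≠ 1 := fun h => by rw [h] at hx; simp at hx
  have hs : 0 < √(1 - x^2) := Real.sqrt_pos.mpr (one_sub_sq_pos hx)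
  have hs2 : √(1 - x^2)^2 = 1 - x^2 := Real.sq_sqrt (one_sub_sq_pos hx).le
  have hA : HasDerivAt arcsin (1 / √(1 - x^2)) x := Real.hasDerivAt_arcsin h1 h2
  have hB : HasDerivAt (fun ρ : ℝ => ρ * √(1 - ρ^2))
      (1 * √(1 - x^2) + x * (1 / (2 * √(1 - x^2)) * (-(2 * x)))) x :=
    (hasDerivAt_id x).mul (hasDerivAt_sqrt_one_sub_sq hx)
  have total := (hA.add hB).const_mul (2 / π)
  refine total.congr_deriv (Eq.symm ?_)
  unfold g2
  field_simp
  linear_combination 2 * hs2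

lemma hasDerivAt_g1_gt {x : ℝ} (hx : 1 < |x|) : HasDerivAt g1 (g2 x) x := by
  have hg2 : g2 x = 0 := by
    unfold g2
    rw [Real.sqrt_eq_zero'.mpr (by nlinarith [sq_abs x, abs_nonneg x])]
    ring
  rw [hg2]
  rcases lt_abs.mp hx with h | h
  · apply (hasDerivAt_const x (1:ℝ)).congr_of_eventuallyEq
    filter_upwards [Ioi_mem_nhds h] with y hy
    exact g1_of_one_le (le_of_lt hy)
  · apply (hasDerivAt_const x (-1:ℝ)).congr_of_eventuallyEq
    filter_upwards [Iio_mem_nhds (show x < -1 by linarith)] with y hy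
    exact g1_of_le_neg_one (le_of_lt hy)

lemma hasDerivAt_g1 (x : ℝ) : HasDerivAt g1 (g2 x) x := by
  rcases lt_trichotomy |x| 1 with h | h | h
  · exact hasDerivAt_g1_lt h
  · apply glue _ (cont_g1.continuousAt) (cont_g2.continuousAt)
    filter_upwards [abs_ne_one_eventually h] with y hy
    rcases lt_or_gt_of_ne hy with h' | h'
    · exact hasDerivAt_g1_lt h'
    · exact hasDerivAt_g1_gt h'
  · exact hasDerivAt_g1_gt h

theorem g_C2 :
    ContDiff ℝ 2 g ∧ deriv g 1 = 1 ∧ deriv g (-1) = -1 ∧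
    deriv (deriv g) 1 = 0 ∧ deriv (deriv g) (-1) = 0 := by
  have hd : deriv g = g1 := funext fun x => (hasDerivAt_g x).deriv
  have hd1 : deriv g1 = g2 := funext fun x => (hasDerivAt_g1 x).deriv
  have c1 : ContDiff ℝ 1 g1 := contDiff_one_iff_deriv.mpr
    ⟨fun x => (hasDerivAt_g1 x).differentiableAt, hd1 ▸ cont_g2⟩
  refine ⟨?_, ?_, ?_, ?_, ?_⟩
  · rw [show (2 : WithTop ℕ∞) = 1 + 1 by norm_num]
    exact contDiff_succ_iff_deriv.mpr
      ⟨fun x => (hasDerivAt_g x).differentiableAt, by simp, hd ▸ c1⟩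
  · rw [hd, g1_of_one_le le_rfl]
  · rw [hd, g1_of_le_neg_one le_rfl]
  · rw [hd, hd1]
    unfold g2
    norm_num
  · rw [hd, hd1]
    unfold g2
    norm_num
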